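/- Let G be a graph on a linearly ordered set S, let D be an acyclic orientation of G|_ρ for ρ ⊆ S, and let x ∈ S \ ρ. Then there is a unique acyclic orientation D' of G|_{ρ ∪ {x}} extending D such that δ_{D'} restricted to ρ equals δ_D and δ_{D'}(x) = x; namely, D' directs each edge {x,b} of G from b to x if δ_D(b) < x, and from x to b otherwise. -/

import Mathlib

/-- `delta ρ D i` is the minimum vertex of `ρ` reachable from `i` by a
directed path in `D` (where `i` is reachable from itself). -/
noncomputable def delta {S : Type*} [LinearOrder S]
    (ρ : Finset S) (D : S → S → Prop) (i : S) : S := by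
  classical
  exact if h : (ρ.filter fun j => Relation.ReflTransGen D i j).Nonempty
    then (ρ.filter fun j => Relation.ReflTransGen D i j).min' h
    else i

/-- `D` is an acyclic orientation of the induced subgraph `G|_ρ`. -/
def IsAcycOrient {S : Type*} (G : SimpleGraph S) (ρ : Finset S)
    (D : S → S → Prop) : Prop :=
  (∀ a b, D a b → a ∈ ρ ∧ b ∈ ρ ∧ G.Adj a b) ∧
  (∀ a b, a ∈ ρ → b ∈ ρ → G.Adj a b → (D a b ↔ ¬ D b a)) ∧
  (∀ a, ¬ Relation.TransGen D a a)

/-- The extension of `D` to `ρ ∪ {x}` directing each edge `{x,b}` of `G`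
from `b` to `x` if `δ_D(b) < x`, and from `x` to `b` otherwise. -/
noncomputable def extendOrient {S : Type*} [LinearOrder S] (G : SimpleGraph S)
    (ρ : Finset S) (D : S → S → Prop) (x : S) : S → S → Prop :=
  fun a b => D a b ∨
    (b = x ∧ a ∈ ρ ∧ G.Adj a x ∧ delta ρ D a < x) ∨
    (a = x ∧ b ∈ ρ ∧ G.Adj x b ∧ ¬ delta ρ D b < x)

/-!
Since `x ∉ ρ`, `δ_D(x) = x`, and `δ_D` serves as a potential on `ρ ∪ {x}`: it is weakly
increasing along the edges of `D` and, by the choice of directions, strictly increasing along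
the new edges at `x`. Hence a cycle of `D' = extendOrient G ρ D x` cannot use `x`, so it is a
cycle of `D`; and every vertex reachable from `i` in `D'` has `δ_D`-value at least `δ_D(i)`,
which gives `δ_{D'} = δ_D` on `ρ ∪ {x}`. Conversely, an orientation `D''` with `δ_{D''} = δ_D`
has `δ_D` weakly increasing along its edges, and for an edge at `x` this pins down its direction,
since `δ_D(b) ≠ x` for `b ∈ ρ`.
-/

open Relation Finset

section Orientation

variable {S : Type*} {G : SimpleGraph S} {ρ : Finset S} {D : S → S → Prop} {i j : S}

theorem IsAcycOrient.eq_of_reflTransGen_of_not_mem (hD : IsAcycOrient G ρ D) (hi : i ∉ ρ)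
    (h : ReflTransGen D i j) : j = i := by
  rcases h.cases_head with rfl | ⟨k, hik, -⟩
  · rfl
  · exact absurd (hD.1 i k hik).1 hi

theorem IsAcycOrient.eq_of_le {D₁ D₂ : S → S → Prop} (h₁ : IsAcycOrient G ρ D₁)
    (h₂ : IsAcycOrient G ρ D₂) (h : D₁ ≤ D₂) : D₁ = D₂ := by
  refine le_antisymm h fun a b hab => ?_
  obtain ⟨ha, hb, hadj⟩ := h₂.1 a b hab
  by_contra hn
  exact (h₂.2.1 a b ha hb hadj).1 hab (h b a ((h₁.2.1 b a hb ha hadj.symm).2 hn))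

end Orientation

section Delta

variable {S : Type*} [LinearOrder S] {G : SimpleGraph S} {ρ : Finset S} {D : S → S → Prop}
  {i j x : S}

theorem delta_le_of_reflTransGen (hj : j ∈ ρ) (h : ReflTransGen D i j) : delta ρ D i ≤ j := by
  classical
  have hmem : j ∈ ρ.filter fun k => ReflTransGen D i k := mem_filter.2 ⟨hj, h⟩
  unfold delta
  rw [dif_pos ⟨j, hmem⟩]
  exact min'_le _ _ hmem

theorem reflTransGen_delta : ReflTransGen D i (delta ρ D i) := by
  classical
  unfold delta
  split_ifs with hne
  · exact (mem_filter.1 (min'_mem _ hne)).2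
  · exact ReflTransGen.refl

theorem delta_mem (hi : i ∈ ρ) : delta ρ D i ∈ ρ := by
  classical
  have hne : (ρ.filter fun k => ReflTransGen D i k).Nonempty :=
    ⟨i, mem_filter.2 ⟨hi, ReflTransGen.refl⟩⟩
  unfold delta
  rw [dif_pos hne]
  exact (mem_filter.1 (min'_mem _ hne)).1

theorem delta_ne_of_not_mem (hi : i ∈ ρ) (hx : x ∉ ρ) : delta ρ D i ≠ x :=
  fun h => hx (h ▸ delta_mem hi)

theorem delta_le_delta (hj : j ∈ ρ) (h : ReflTransGen D i j) : delta ρ D i ≤ delta ρ D j :=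
  delta_le_of_reflTransGen (delta_mem hj) (h.trans reflTransGen_delta)

theorem IsAcycOrient.delta_of_not_mem (hD : IsAcycOrient G ρ D) (hi : i ∉ ρ) :
    delta ρ D i = i := by
  classical
  unfold delta
  rw [dif_neg]
  rintro ⟨j, hj⟩
  obtain ⟨hjρ, hij⟩ := mem_filter.1 hj
  exact hi (hD.eq_of_reflTransGen_of_not_mem hi hij ▸ hjρ)

theorem IsAcycOrient.delta_le_self (hD : IsAcycOrient G ρ D) : delta ρ D i ≤ i := by
  by_cases hi : i ∈ ρ
  · exact delta_le_of_reflTransGen hi ReflTransGen.refl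
  · exact (hD.delta_of_not_mem hi).le

end Delta

section Extend

variable {S : Type*} [LinearOrder S] {G : SimpleGraph S} {ρ : Finset S} {D : S → S → Prop}
  {x a b : S}

theorem extendOrient_iff_of_mem (hx : x ∉ ρ) (ha : a ∈ ρ) (hb : b ∈ ρ) :
    extendOrient G ρ D x a b ↔ D a b := by
  refine ⟨?_, Or.inl⟩
  rintro (h | ⟨rfl, -⟩ | ⟨rfl, -⟩)
  · exact h
  · exact absurd hb hx
  · exact absurd ha hx

theorem extendOrient_self_left_iff (hD : IsAcycOrient G ρ D) (hx : x ∉ ρ) (hb : b ∈ ρ)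
    (hadj : G.Adj x b) : extendOrient G ρ D x x b ↔ x ≤ delta ρ D b := by
  rw [← not_lt]
  refine ⟨?_, fun h => Or.inr (Or.inr ⟨rfl, hb, hadj, h⟩)⟩
  rintro (h | ⟨rfl, -⟩ | ⟨-, -, -, h⟩)
  · exact absurd (hD.1 x b h).1 hx
  · exact absurd hb hx
  · exact h

theorem extendOrient_self_right_iff (hD : IsAcycOrient G ρ D) (hx : x ∉ ρ) (ha : a ∈ ρ)
    (hadj : G.Adj a x) : extendOrient G ρ D x a x ↔ delta ρ D a < x := by
  refine ⟨?_, fun h => Or.inr (Or.inl ⟨rfl, ha, hadj, h⟩)⟩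
  rintro (h | ⟨-, -, -, h⟩ | ⟨rfl, -⟩)
  · exact absurd (hD.1 a x h).2.1 hx
  · exact h
  · exact absurd ha hx

theorem delta_lt_delta_of_extendOrient (hD : IsAcycOrient G ρ D) (hx : x ∉ ρ)
    (h : extendOrient G ρ D x a b) (hn : ¬ D a b) : delta ρ D a < delta ρ D b := by
  rcases h with h | ⟨rfl, -, -, hlt⟩ | ⟨rfl, hb, -, hnlt⟩
  · exact absurd h hn
  · rwa [hD.delta_of_not_mem hx]
  · rw [hD.delta_of_not_mem hx]
    exact (not_lt.1 hnlt).lt_of_ne (delta_ne_of_not_mem hb hx).symm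

theorem delta_le_delta_of_extendOrient (hD : IsAcycOrient G ρ D) (hx : x ∉ ρ)
    (h : extendOrient G ρ D x a b) : delta ρ D a ≤ delta ρ D b := by
  by_cases hab : D a b
  · exact delta_le_delta (hD.1 a b hab).2.1 (ReflTransGen.single hab)
  · exact (delta_lt_delta_of_extendOrient hD hx h hab).le

theorem delta_le_delta_of_reflTransGen_extendOrient (hD : IsAcycOrient G ρ D) (hx : x ∉ ρ)
    (h : ReflTransGen (extendOrient G ρ D x) a b) : delta ρ D a ≤ delta ρ D b := by
  induction h with
  | refl => exact le_rfl
  | tail _ hjk ih => exact ih.trans (delta_le_delta_of_extendOrient hD hx hjk)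

theorem transGen_or_delta_lt_of_transGen_extendOrient (hD : IsAcycOrient G ρ D) (hx : x ∉ ρ)
    (h : TransGen (extendOrient G ρ D x) a b) : TransGen D a b ∨ delta ρ D a < delta ρ D b := by
  induction h with
  | @single c hac =>
    by_cases hD_ac : D a c
    · exact Or.inl (TransGen.single hD_ac)
    · exact Or.inr (delta_lt_delta_of_extendOrient hD hx hac hD_ac)
  | @tail j k hij hjk ih =>
    by_cases hD_jk : D j k
    · exact ih.imp (·.tail hD_jk) (·.trans_le (delta_le_delta_of_extendOrient hD hx hjk))
    · exact Or.inr ((delta_le_delta_of_reflTransGen_extendOrient hD hx hij.to_reflTransGen).trans_lt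
        (delta_lt_delta_of_extendOrient hD hx hjk hD_jk))

variable [DecidableEq S]

theorem IsAcycOrient.extendOrient (hD : IsAcycOrient G ρ D) (hx : x ∉ ρ) :
    IsAcycOrient G (insert x ρ) (extendOrient G ρ D x) := by
  refine ⟨?_, ?_, fun a hcyc => ?_⟩
  · rintro a b (h | ⟨rfl, ha, hadj, -⟩ | ⟨rfl, hb, hadj, -⟩)
    · obtain ⟨ha, hb, hadj⟩ := hD.1 a b h
      exact ⟨mem_insert_of_mem ha, mem_insert_of_mem hb, hadj⟩
    · exact ⟨mem_insert_of_mem ha, mem_insert_self _ _, hadj⟩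
    · exact ⟨mem_insert_self _ _, mem_insert_of_mem hb, hadj⟩
  · intro a b ha hb hadj
    rw [mem_insert] at ha hb
    rcases ha with rfl | ha <;> rcases hb with rfl | hb
    · exact (G.irrefl hadj).elim
    · rw [extendOrient_self_left_iff hD hx hb hadj,
        extendOrient_self_right_iff hD hx hb hadj.symm, not_lt]
    · rw [extendOrient_self_right_iff hD hx ha hadj,
        extendOrient_self_left_iff hD hx ha hadj.symm, not_le]
    · rw [extendOrient_iff_of_mem hx ha hb, extendOrient_iff_of_mem hx hb ha]
      exact hD.2.1 a b ha hb hadj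
  · exact (transGen_or_delta_lt_of_transGen_extendOrient hD hx hcyc).elim (hD.2.2 a)
      (lt_irrefl _)

theorem delta_extendOrient (hD : IsAcycOrient G ρ D) (hx : x ∉ ρ) {i : S}
    (hi : i ∈ insert x ρ) : delta (insert x ρ) (extendOrient G ρ D x) i = delta ρ D i := by
  apply le_antisymm
  · refine delta_le_of_reflTransGen ?_ (ReflTransGen.mono (r := D) (fun _ _ => Or.inl) _ _ reflTransGen_delta)
    rcases mem_insert.1 hi with rfl | hi
    · rw [hD.delta_of_not_mem hx]
      exact mem_insert_self _ _
    · exact mem_insert_of_mem (delta_mem hi)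
  · exact (delta_le_delta_of_reflTransGen_extendOrient hD hx reflTransGen_delta).trans
      hD.delta_le_self

theorem le_extendOrient_of_delta_eq (hD : IsAcycOrient G ρ D) (hx : x ∉ ρ)
    {D'' : S → S → Prop} (hD'' : IsAcycOrient G (insert x ρ) D'')
    (hagree : ∀ a b, a ∈ ρ → b ∈ ρ → (D'' a b ↔ D a b))
    (hδ : ∀ i ∈ insert x ρ, delta (insert x ρ) D'' i = delta ρ D i) :
    D'' ≤ extendOrient G ρ D x := by
  intro a b hab
  obtain ⟨ha, hb, hadj⟩ := hD''.1 a b hab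
  have hle : delta ρ D a ≤ delta ρ D b := by
    rw [← hδ a ha, ← hδ b hb]
    exact delta_le_delta hb (ReflTransGen.single hab)
  rw [mem_insert] at ha hb
  rcases ha with rfl | ha <;> rcases hb with rfl | hb
  · exact (G.irrefl hadj).elim
  · rw [hD.delta_of_not_mem hx] at hle
    exact (extendOrient_self_left_iff hD hx hb hadj).2 hle
  · rw [hD.delta_of_not_mem hx] at hle
    exact (extendOrient_self_right_iff hD hx ha hadj).2
      (hle.lt_of_ne (delta_ne_of_not_mem ha hx))
  · exact (extendOrient_iff_of_mem hx ha hb).2 ((hagree a b ha hb).1 hab)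

end Extend

/-- There is a unique acyclic orientation `D'` of `G|_{ρ ∪ {x}}` extending the
acyclic orientation `D` of `G|_ρ` such that `δ_{D'}` restricted to `ρ` equals
`δ_D` and `δ_{D'}(x) = x`; namely `extendOrient G ρ D x`. -/
theorem extendOrient_unique {S : Type*} [LinearOrder S] [DecidableEq S]
    (G : SimpleGraph S) (ρ : Finset S) (D : S → S → Prop)
    (hD : IsAcycOrient G ρ D) (x : S) (hx : x ∉ ρ) :
    (IsAcycOrient G (insert x ρ) (extendOrient G ρ D x) ∧
      (∀ i ∈ ρ, delta (insert x ρ) (extendOrient G ρ D x) i = delta ρ D i) ∧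
      delta (insert x ρ) (extendOrient G ρ D x) x = x) ∧
    (∀ D'' : S → S → Prop, IsAcycOrient G (insert x ρ) D'' →
      (∀ a b, a ∈ ρ → b ∈ ρ → (D'' a b ↔ D a b)) →
      (∀ i ∈ ρ, delta (insert x ρ) D'' i = delta ρ D i) →
      delta (insert x ρ) D'' x = x →
      D'' = extendOrient G ρ D x) := by
  have hδx : delta ρ D x = x := hD.delta_of_not_mem hx
  refine ⟨⟨hD.extendOrient hx, fun i hi => delta_extendOrient hD hx (mem_insert_of_mem hi), ?_⟩,
    fun D'' hD'' hagree hδρ hδ''x => ?_⟩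
  · rw [delta_extendOrient hD hx (mem_insert_self x ρ), hδx]
  · have hδ : ∀ i ∈ insert x ρ, delta (insert x ρ) D'' i = delta ρ D i :=
      forall_mem_insert _ _ _ |>.2 ⟨hδ''x.trans hδx.symm, hδρ⟩
    exact hD''.eq_of_le (hD.extendOrient hx) (le_extendOrient_of_delta_eq hD hx hD'' hagree hδ)
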